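/- For every integer μ ≥ 1 and every integer N ≥ 2, W₁(Binomial(μN, 1/N), Poisson(μ)) ≤ √(2μ/π)/√N ≤ √μ/√N, where W₁ is the Wasserstein-1 distance on ℕ. -/

import Mathlib

open MeasureTheory ENNReal

noncomputable section

/-- The Wasserstein-1 distance (valued in `ℝ≥0∞`) between two measures on `ℕ`. -/
def W1nat (π₁ π₂ : Measure ℕ) : ℝ≥0∞ :=
  ⨅ (π : Measure (ℕ × ℕ)) (_ : π.map Prod.fst = π₁) (_ : π.map Prod.snd = π₂),
    ∫⁻ z, (Nat.dist z.1 z.2 : ℝ≥0∞) ∂π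

/-- The measure on `ℕ` associated with a (sub-)probability mass function `p`. -/
def seqMeas (p : ℕ → ℝ) : Measure ℕ :=
  Measure.sum (fun n : ℕ => ENNReal.ofReal (p n) • Measure.dirac n)

/-- The Poisson distribution with mean `μ` as a measure on `ℕ`. -/
def poissonMeas (μ : ℝ) : Measure ℕ :=
  seqMeas (fun n => μ ^ n * Real.exp (-μ) / n.factorial)

/-- The binomial distribution with parameters `n` and `p` as a measure on `ℕ`. -/
def binomialMeas (n : ℕ) (p : ℝ) : Measure ℕ :=
  seqMeas (fun k => if k ≤ n then (n.choose k : ℝ) * p ^ k * (1 - p) ^ (n - k) else 0)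

/-!
Put `n = μN` and `p = 1/N`, so that `np = μ`. Draw `M ∼ Po(n)` and, given `M`, realise
`X ∼ Bin(n, p)` and `Y ∼ Bin(M, p)` on nested blocks of Bernoulli trials, so that `|X - Y|` is
`Bin(|M - n|, p)`. Thinning makes `Y ∼ Po(np) = Po(μ)`, and the cost of this coupling is
`p 𝔼|M - n| = p · 2n · nⁿe⁻ⁿ/n!` (the mean absolute deviation of `Po(n)`). Stirling's bound
`n! ≥ √(2πn) (n/e)ⁿ` turns it into `p √(2n/π) = √(2μ/π)/√N`.
-/

namespace BinomialPoissonW1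

open Finset

-- `binomialMeas n p = seqMeas (binomPmf n p)` and `poissonMeas l = seqMeas (poissonPmf l)`
-- hold by `rfl`.
def binomPmf (n : ℕ) (p : ℝ) (k : ℕ) : ℝ :=
  if k ≤ n then (n.choose k : ℝ) * p ^ k * (1 - p) ^ (n - k) else 0

def poissonPmf (l : ℝ) (m : ℕ) : ℝ := l ^ m * Real.exp (-l) / m.factorial

lemma hasSum_sum_range_of_lt {f : ℕ → ℝ} (n : ℕ) (h : ∀ k, n < k → f k = 0) :
    HasSum f (∑ k ∈ range (n + 1), f k) :=
  hasSum_sum_of_ne_finset_zero fun k hk => h k (by simpa [Nat.lt_succ_iff] using hk)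

section Binomial

variable {p : ℝ}

lemma binomPmf_eq_choose_mul (n : ℕ) (p : ℝ) (k : ℕ) :
    binomPmf n p k = n.choose k * p ^ k * (1 - p) ^ (n - k) := by
  unfold binomPmf
  split_ifs with h
  · rfl
  · simp [Nat.choose_eq_zero_of_lt (not_le.1 h)]

lemma binomPmf_eq_zero_of_lt {n k : ℕ} (h : n < k) : binomPmf n p k = 0 :=
  if_neg (not_le.2 h)

lemma binomPmf_nonneg (hp0 : 0 ≤ p) (hp1 : p ≤ 1) (n k : ℕ) : 0 ≤ binomPmf n p k := by
  have hq : 0 ≤ 1 - p := sub_nonneg.2 hp1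
  rw [binomPmf_eq_choose_mul]
  positivity

lemma sum_range_binomPmf (n : ℕ) (p : ℝ) : ∑ k ∈ range (n + 1), binomPmf n p k = 1 := by
  have h := (add_pow p (1 - p) n).symm
  rw [add_sub_cancel, one_pow] at h
  rw [← h]
  exact sum_congr rfl fun k _ => by rw [binomPmf_eq_choose_mul]; ring

lemma sum_range_mul_binomPmf (n : ℕ) (p : ℝ) :
    ∑ k ∈ range (n + 1), (k : ℝ) * binomPmf n p k = n * p := by
  cases n with
  | zero => simp
  | succ n =>
    have hterm (k : ℕ) : ((k + 1 : ℕ) : ℝ) * binomPmf (n + 1) p (k + 1)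
        = (n + 1 : ℕ) * p * binomPmf n p k := by
      have hc : ((n + 1 : ℕ) : ℝ) * n.choose k = (n + 1).choose (k + 1) * (k + 1 : ℕ) := by
        exact_mod_cast Nat.add_one_mul_choose_eq n k
      simp only [binomPmf_eq_choose_mul, Nat.add_sub_add_right, pow_succ]
      linear_combination (-(p ^ k * p * (1 - p) ^ (n - k))) * hc
    rw [sum_range_succ', sum_congr rfl fun k _ => hterm k, ← mul_sum, sum_range_binomPmf]
    simp

lemma sum_range_binomPmf_mul_binomPmf (a b : ℕ) (p : ℝ) (k : ℕ) :
    ∑ i ∈ range (k + 1), binomPmf a p i * binomPmf b p (k - i) = binomPmf (a + b) p k := by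
  rw [← Nat.sum_antidiagonal_eq_sum_range_succ_mk
    (fun ij => binomPmf a p ij.1 * binomPmf b p ij.2)]
  by_cases hk : k ≤ a + b
  · have hterm : ∀ ij ∈ antidiagonal k, binomPmf a p ij.1 * binomPmf b p ij.2
        = (a.choose ij.1 * b.choose ij.2 : ℕ) * (p ^ k * (1 - p) ^ (a + b - k)) := by
      rintro ⟨i, j⟩ hij
      rw [HasAntidiagonal.mem_antidiagonal] at hij
      simp only [binomPmf_eq_choose_mul]
      by_cases hle : i ≤ a ∧ j ≤ b
      · have hp : p ^ k = p ^ i * p ^ j := by rw [← pow_add, hij]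
        have hq : (1 - p) ^ (a + b - k) = (1 - p) ^ (a - i) * (1 - p) ^ (b - j) := by
          rw [← pow_add]; congr 1; omega
        rw [hp, hq]; push_cast; ring
      · rcases not_and_or.1 hle with hi | hj
        · simp [Nat.choose_eq_zero_of_lt (not_le.1 hi)]
        · simp [Nat.choose_eq_zero_of_lt (not_le.1 hj)]
    rw [sum_congr rfl hterm, ← sum_mul, ← Nat.cast_sum, ← Nat.add_choose_eq,
      binomPmf_eq_choose_mul]
    ring
  · rw [binomPmf_eq_zero_of_lt (not_le.1 hk)]
    refine sum_eq_zero fun ⟨i, j⟩ hij => ?_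
    rw [HasAntidiagonal.mem_antidiagonal] at hij
    rcases lt_or_ge a i with hi | hi
    · rw [binomPmf_eq_zero_of_lt hi, zero_mul]
    · rw [binomPmf_eq_zero_of_lt (show b < j by omega), mul_zero]

end Binomial

section Poisson

variable {l : ℝ}

lemma poissonPmf_nonneg (hl : 0 ≤ l) (m : ℕ) : 0 ≤ poissonPmf l m := by
  unfold poissonPmf
  positivity

lemma hasSum_pow_div_factorial (x : ℝ) :
    HasSum (fun m : ℕ => x ^ m / m.factorial) (Real.exp x) := by
  rw [Real.exp_eq_exp_ℝ]
  exact NormedSpace.expSeries_div_hasSum_exp x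

lemma hasSum_poissonPmf (l : ℝ) : HasSum (poissonPmf l) 1 := by
  have h := (hasSum_pow_div_factorial l).mul_right (Real.exp (-l))
  rw [← Real.exp_add, add_neg_cancel, Real.exp_zero] at h
  have hpmf : poissonPmf l = fun m => l ^ m / m.factorial * Real.exp (-l) := by
    funext m
    rw [poissonPmf, div_mul_eq_mul_div]
  rwa [hpmf]

lemma succ_mul_poissonPmf_succ (l : ℝ) (m : ℕ) :
    (m + 1) * poissonPmf l (m + 1) = l * poissonPmf l m := by
  rw [poissonPmf, poissonPmf, pow_succ, Nat.factorial_succ]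
  push_cast
  field_simp

lemma hasSum_mul_poissonPmf (l : ℝ) : HasSum (fun m : ℕ => m * poissonPmf l m) l := by
  rw [← hasSum_nat_add_iff' 1]
  simpa [succ_mul_poissonPmf_succ] using (hasSum_poissonPmf l).mul_left l

lemma sum_range_sub_mul_poissonPmf (l : ℝ) (c : ℕ) :
    ∑ m ∈ range (c + 1), (l - m) * poissonPmf l m = l * poissonPmf l c := by
  induction c with
  | zero => simp
  | succ c ih =>
    rw [sum_range_succ, ih]
    push_cast
    linear_combination -succ_mul_poissonPmf_succ l c

-- `|m - n| = (m - n) + 2 (n - m)⁺`, and the Poisson law with mean `n` kills the first part.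
lemma hasSum_dist_mul_poissonPmf (n : ℕ) :
    HasSum (fun m : ℕ => (Nat.dist m n : ℝ) * poissonPmf n m) (2 * n * poissonPmf n n) := by
  have hcentred : HasSum (fun m : ℕ => (m - n : ℝ) * poissonPmf n m) 0 := by
    simpa [sub_mul] using (hasSum_mul_poissonPmf (n : ℝ)).sub
      ((hasSum_poissonPmf (n : ℝ)).mul_left (n : ℝ))
  have hlower : HasSum (fun m : ℕ => (if m ≤ n then (n - m : ℝ) else 0) * poissonPmf n m)
      (n * poissonPmf n n) := by
    have h := hasSum_sum_range_of_lt n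
      (f := fun m : ℕ => (if m ≤ n then (n - m : ℝ) else 0) * poissonPmf n m)
      fun m hm => by rw [if_neg hm.not_ge, zero_mul]
    rwa [sum_congr rfl fun m hm => by rw [if_pos (Nat.lt_succ_iff.1 (mem_range.1 hm))],
      sum_range_sub_mul_poissonPmf] at h
  convert hcentred.add (hlower.mul_left 2) using 1
  · ext m
    rcases le_or_gt m n with h | h
    · simp only [Nat.dist_eq_sub_of_le h, Nat.cast_sub h, h, if_true]
      ring
    · simp [not_le.2 h, Nat.dist_eq_sub_of_le_right h.le, Nat.cast_sub h.le]
  · ring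

lemma hasSum_poissonPmf_mul_binomPmf (l p : ℝ) (j : ℕ) :
    HasSum (fun m : ℕ => poissonPmf l m * binomPmf m p j) (poissonPmf (l * p) j) := by
  rw [← hasSum_nat_add_iff' j]
  have hhead : ∑ m ∈ range j, poissonPmf l m * binomPmf m p j = 0 :=
    sum_eq_zero fun m hm => by rw [binomPmf_eq_zero_of_lt (mem_range.1 hm), mul_zero]
  have hterm (t : ℕ) : poissonPmf l (t + j) * binomPmf (t + j) p j
      = (l * p) ^ j * Real.exp (-l) / j.factorial * ((l * (1 - p)) ^ t / t.factorial) := by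
    have hc : ((t + j).choose j : ℝ) * t.factorial * j.factorial = (t + j).factorial := by
      exact_mod_cast Nat.add_choose_mul_factorial_mul_factorial t j
    have hc0 : ((t + j).choose j : ℝ) ≠ 0 :=
      Nat.cast_ne_zero.2 (Nat.choose_pos (Nat.le_add_left j t)).ne'
    rw [poissonPmf, binomPmf_eq_choose_mul, Nat.add_sub_cancel, ← hc, mul_pow, mul_pow]
    field_simp
    ring
  have hexp : (l * p) ^ j * Real.exp (-l) / j.factorial * Real.exp (l * (1 - p))
      = poissonPmf (l * p) j := by
    rw [poissonPmf, mul_div_right_comm, mul_assoc, ← Real.exp_add]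
    ring_nf
  simpa only [hhead, sub_zero, hterm, hexp] using
    (hasSum_pow_div_factorial (l * (1 - p))).mul_left ((l * p) ^ j * Real.exp (-l) / j.factorial)

lemma two_mul_poissonPmf_self_le (n : ℕ) :
    2 * n * poissonPmf n n ≤ √(2 * n / Real.pi) := by
  have hstirling := Stirling.le_factorial_stirling n
  have hsqrt : √(2 * n / Real.pi) * √(2 * Real.pi * n) = 2 * n := by
    rw [← Real.sqrt_mul (by positivity), show 2 * n / Real.pi * (2 * Real.pi * n) = (2 * n) ^ 2 by
      field_simp, Real.sqrt_sq (by positivity)]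
  have hpow : ((n : ℝ) / Real.exp 1) ^ n = n ^ n * Real.exp (-n) := by
    rw [div_pow, ← Real.exp_nat_mul, mul_one, Real.exp_neg, div_eq_mul_inv]
  rw [poissonPmf, ← mul_div_assoc, div_le_iff₀ (by positivity)]
  calc 2 * n * (n ^ n * Real.exp (-n))
      = √(2 * n / Real.pi) * (√(2 * Real.pi * n) * ((n : ℝ) / Real.exp 1) ^ n) := by
        rw [hpow, ← mul_assoc √(2 * n / Real.pi), hsqrt]
    _ ≤ √(2 * n / Real.pi) * n.factorial := by gcongr

end Poisson

lemma W1nat_seqMeas_le_of_coupling (f g : ℕ → ℝ) (q : ℕ × ℕ → ℝ≥0∞)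
    (hf : ∀ k, ∑' j, q (k, j) = ENNReal.ofReal (f k))
    (hg : ∀ j, ∑' k, q (k, j) = ENNReal.ofReal (g j)) :
    W1nat (seqMeas f) (seqMeas g) ≤ ∑' k, ∑' j, q (k, j) * Nat.dist k j := by
  set γ : Measure (ℕ × ℕ) := Measure.sum fun x => q x • Measure.dirac x
  have hfst : γ.map Prod.fst = seqMeas f := by
    refine Measure.ext_of_singleton fun k => ?_
    rw [seqMeas, Measure.sum_smul_dirac_singleton, ← hf,
      Measure.map_apply measurable_fst (measurableSet_singleton k),
      Measure.sum_apply _ (measurable_fst (measurableSet_singleton k)), ENNReal.tsum_prod']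
    simp only [Measure.smul_apply, Measure.dirac_apply, Set.indicator, Set.mem_preimage,
      Set.mem_singleton_iff, Pi.one_apply, smul_eq_mul, mul_ite, mul_one, mul_zero]
    rw [tsum_eq_single k fun a ha => by simp [ha]]
    simp
  have hsnd : γ.map Prod.snd = seqMeas g := by
    refine Measure.ext_of_singleton fun j => ?_
    rw [seqMeas, Measure.sum_smul_dirac_singleton, ← hg,
      Measure.map_apply measurable_snd (measurableSet_singleton j),
      Measure.sum_apply _ (measurable_snd (measurableSet_singleton j)), ENNReal.tsum_prod']
    simp only [Measure.smul_apply, Measure.dirac_apply, Set.indicator, Set.mem_preimage,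
      Set.mem_singleton_iff, Pi.one_apply, smul_eq_mul, mul_ite, mul_one, mul_zero]
    simp
  have hcost : ∫⁻ z, (Nat.dist z.1 z.2 : ℝ≥0∞) ∂γ = ∑' k, ∑' j, q (k, j) * Nat.dist k j := by
    simp only [γ, lintegral_sum_measure, lintegral_smul_measure, lintegral_dirac]
    exact ENNReal.tsum_prod'
  exact hcost ▸ iInf₂_le_of_le γ hfst (iInf_le _ hsnd)

section Coupling

variable {p : ℝ}

lemma tsum_ofReal_of_hasSum {ι : Type*} {f : ι → ℝ} {a : ℝ} (hf : ∀ i, 0 ≤ f i)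
    (h : HasSum f a) : ∑' i, ENNReal.ofReal (f i) = ENNReal.ofReal a := by
  rw [← ENNReal.ofReal_tsum_of_nonneg hf h.summable, h.tsum_eq]

lemma tsum_ite_le (x : ℕ) (G : ℕ → ℝ≥0∞) :
    ∑' y, (if x ≤ y then G y else 0) = ∑' z, G (z + x) := by
  rw [← (add_left_injective x).tsum_eq]
  · simp
  · intro y hy
    have hxy : x ≤ y := by by_contra h; simp [h] at hy
    exact ⟨y - x, Nat.sub_add_cancel hxy⟩

lemma tsum_ofReal_binomPmf (hp0 : 0 ≤ p) (hp1 : p ≤ 1) (n : ℕ) :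
    ∑' k, ENNReal.ofReal (binomPmf n p k) = 1 := by
  rw [tsum_ofReal_of_hasSum (binomPmf_nonneg hp0 hp1 n) (hasSum_sum_range_of_lt n
    fun k hk => binomPmf_eq_zero_of_lt hk), sum_range_binomPmf, ENNReal.ofReal_one]

lemma tsum_ofReal_binomPmf_mul (hp0 : 0 ≤ p) (hp1 : p ≤ 1) (n : ℕ) :
    ∑' k, ENNReal.ofReal (binomPmf n p k) * k = ENNReal.ofReal (n * p) := by
  have h := tsum_ofReal_of_hasSum (fun k => mul_nonneg k.cast_nonneg (binomPmf_nonneg hp0 hp1 n k))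
    (hasSum_sum_range_of_lt n fun k hk => by rw [binomPmf_eq_zero_of_lt hk, mul_zero])
  rw [sum_range_mul_binomPmf] at h
  rw [← h]
  refine tsum_congr fun k => ?_
  rw [ENNReal.ofReal_mul k.cast_nonneg, ENNReal.ofReal_natCast, mul_comm]

-- The joint law of `(X, X + Z)` for independent `X ∼ Bin(a, p)` and `Z ∼ Bin(b, p)`.
def binomAddCoupling (p : ℝ) (a b : ℕ) (x : ℕ × ℕ) : ℝ≥0∞ :=
  if x.1 ≤ x.2 then ENNReal.ofReal (binomPmf a p x.1 * binomPmf b p (x.2 - x.1)) else 0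

lemma tsum_binomAddCoupling_right (hp0 : 0 ≤ p) (hp1 : p ≤ 1) (a b x : ℕ) :
    ∑' y, binomAddCoupling p a b (x, y) = ENNReal.ofReal (binomPmf a p x) := by
  simp only [binomAddCoupling]
  rw [tsum_ite_le]
  simp only [Nat.add_sub_cancel, ENNReal.ofReal_mul (binomPmf_nonneg hp0 hp1 a x)]
  rw [ENNReal.tsum_mul_left, tsum_ofReal_binomPmf hp0 hp1, mul_one]

lemma tsum_binomAddCoupling_left (hp0 : 0 ≤ p) (hp1 : p ≤ 1) (a b y : ℕ) :
    ∑' x, binomAddCoupling p a b (x, y) = ENNReal.ofReal (binomPmf (a + b) p y) := by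
  have hnonneg (x : ℕ) : 0 ≤ if x ≤ y then binomPmf a p x * binomPmf b p (y - x) else 0 := by
    split_ifs
    · exact mul_nonneg (binomPmf_nonneg hp0 hp1 a x) (binomPmf_nonneg hp0 hp1 b _)
    · exact le_rfl
  have h := tsum_ofReal_of_hasSum hnonneg (hasSum_sum_range_of_lt y fun x hx => if_neg hx.not_ge)
  rw [sum_congr rfl fun x hx => if_pos (Nat.lt_succ_iff.1 (mem_range.1 hx)),
    sum_range_binomPmf_mul_binomPmf] at h
  simpa only [binomAddCoupling, apply_ite ENNReal.ofReal, ENNReal.ofReal_zero] using h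

lemma tsum_binomAddCoupling_mul_dist (hp0 : 0 ≤ p) (hp1 : p ≤ 1) (a b : ℕ) :
    ∑' x, ∑' y, binomAddCoupling p a b (x, y) * Nat.dist x y = ENNReal.ofReal (b * p) := by
  have hrow (x : ℕ) : ∑' y, binomAddCoupling p a b (x, y) * Nat.dist x y
      = ENNReal.ofReal (binomPmf a p x) * ENNReal.ofReal (b * p) := by
    simp only [binomAddCoupling, ite_mul, zero_mul]
    rw [tsum_ite_le]
    have hdist (z : ℕ) : Nat.dist x (z + x) = z := by
      rw [Nat.dist_eq_sub_of_le (Nat.le_add_left x z), Nat.add_sub_cancel]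
    simp only [Nat.add_sub_cancel, hdist, ENNReal.ofReal_mul (binomPmf_nonneg hp0 hp1 a x),
      mul_assoc]
    rw [ENNReal.tsum_mul_left, tsum_ofReal_binomPmf_mul hp0 hp1]
  rw [tsum_congr hrow, ENNReal.tsum_mul_right, tsum_ofReal_binomPmf hp0 hp1, one_mul]

def binomCoupling (p : ℝ) (n m : ℕ) (x : ℕ × ℕ) : ℝ≥0∞ :=
  if n ≤ m then binomAddCoupling p n (m - n) x else binomAddCoupling p m (n - m) x.swap

lemma tsum_binomCoupling_right (hp0 : 0 ≤ p) (hp1 : p ≤ 1) (n m k : ℕ) :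
    ∑' j, binomCoupling p n m (k, j) = ENNReal.ofReal (binomPmf n p k) := by
  unfold binomCoupling
  split_ifs with h
  · exact tsum_binomAddCoupling_right hp0 hp1 n (m - n) k
  · simpa only [Prod.swap_prod_mk, Nat.add_sub_of_le (not_le.1 h).le]
      using tsum_binomAddCoupling_left hp0 hp1 m (n - m) k

lemma tsum_binomCoupling_left (hp0 : 0 ≤ p) (hp1 : p ≤ 1) (n m j : ℕ) :
    ∑' k, binomCoupling p n m (k, j) = ENNReal.ofReal (binomPmf m p j) := by
  unfold binomCoupling
  split_ifs with h
  · simpa only [Nat.add_sub_of_le h] using tsum_binomAddCoupling_left hp0 hp1 n (m - n) j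
  · exact tsum_binomAddCoupling_right hp0 hp1 m (n - m) j

lemma tsum_binomCoupling_mul_dist (hp0 : 0 ≤ p) (hp1 : p ≤ 1) (n m : ℕ) :
    ∑' k, ∑' j, binomCoupling p n m (k, j) * Nat.dist k j
      = ENNReal.ofReal (Nat.dist m n * p) := by
  unfold binomCoupling
  split_ifs with h
  · rw [tsum_binomAddCoupling_mul_dist hp0 hp1, Nat.dist_eq_sub_of_le_right h]
  · simp only [Prod.swap_prod_mk]
    rw [ENNReal.tsum_comm]
    simp only [Nat.dist_comm]
    rw [tsum_binomAddCoupling_mul_dist hp0 hp1, Nat.dist_eq_sub_of_le_right (not_le.1 h).le]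

def poissonMixCoupling (p : ℝ) (n : ℕ) (x : ℕ × ℕ) : ℝ≥0∞ :=
  ∑' m, ENNReal.ofReal (poissonPmf n m) * binomCoupling p n m x

lemma tsum_poissonMixCoupling_right (hp0 : 0 ≤ p) (hp1 : p ≤ 1) (n k : ℕ) :
    ∑' j, poissonMixCoupling p n (k, j) = ENNReal.ofReal (binomPmf n p k) := by
  simp only [poissonMixCoupling]
  rw [ENNReal.tsum_comm]
  simp only [ENNReal.tsum_mul_left, tsum_binomCoupling_right hp0 hp1]
  rw [ENNReal.tsum_mul_right, tsum_ofReal_of_hasSum (poissonPmf_nonneg n.cast_nonneg)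
    (hasSum_poissonPmf n), ENNReal.ofReal_one, one_mul]

lemma tsum_poissonMixCoupling_left (hp0 : 0 ≤ p) (hp1 : p ≤ 1) (n j : ℕ) :
    ∑' k, poissonMixCoupling p n (k, j) = ENNReal.ofReal (poissonPmf (n * p) j) := by
  simp only [poissonMixCoupling]
  rw [ENNReal.tsum_comm]
  simp only [ENNReal.tsum_mul_left, tsum_binomCoupling_left hp0 hp1,
    ← ENNReal.ofReal_mul (poissonPmf_nonneg n.cast_nonneg _)]
  exact tsum_ofReal_of_hasSum (fun m => mul_nonneg (poissonPmf_nonneg n.cast_nonneg m)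
    (binomPmf_nonneg hp0 hp1 m j)) (hasSum_poissonPmf_mul_binomPmf n p j)

lemma tsum_poissonMixCoupling_mul_dist (hp0 : 0 ≤ p) (hp1 : p ≤ 1) (n : ℕ) :
    ∑' k, ∑' j, poissonMixCoupling p n (k, j) * Nat.dist k j
      = ENNReal.ofReal (p * (2 * n * poissonPmf n n)) := by
  simp only [poissonMixCoupling, ← ENNReal.tsum_mul_right, mul_assoc]
  rw [(tsum_congr fun k => ENNReal.tsum_comm).trans ENNReal.tsum_comm]
  simp only [ENNReal.tsum_mul_left, tsum_binomCoupling_mul_dist hp0 hp1,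
    ← ENNReal.ofReal_mul (poissonPmf_nonneg n.cast_nonneg _)]
  refine tsum_ofReal_of_hasSum (fun m => mul_nonneg (poissonPmf_nonneg n.cast_nonneg m)
    (mul_nonneg (Nat.cast_nonneg _) hp0)) ?_
  have hfun : (fun m : ℕ => poissonPmf n m * (Nat.dist m n * p))
      = fun m => p * (Nat.dist m n * poissonPmf n m) := funext fun m => by ring
  rw [hfun, ← mul_assoc 2]
  exact (hasSum_dist_mul_poissonPmf n).mul_left p

end Coupling

theorem W1nat_binomialMeas_poissonMeas_le {p : ℝ} (hp0 : 0 ≤ p) (hp1 : p ≤ 1) (n : ℕ) :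
    W1nat (binomialMeas n p) (poissonMeas (n * p)) ≤ ENNReal.ofReal (p * √(2 * n / Real.pi)) :=
  calc W1nat (binomialMeas n p) (poissonMeas (n * p))
      ≤ ∑' k, ∑' j, poissonMixCoupling p n (k, j) * Nat.dist k j :=
        W1nat_seqMeas_le_of_coupling _ _ _ (tsum_poissonMixCoupling_right hp0 hp1 n)
          (tsum_poissonMixCoupling_left hp0 hp1 n)
    _ = ENNReal.ofReal (p * (2 * n * poissonPmf n n)) :=
        tsum_poissonMixCoupling_mul_dist hp0 hp1 n
    _ ≤ ENNReal.ofReal (p * √(2 * n / Real.pi)) :=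
        ENNReal.ofReal_le_ofReal (mul_le_mul_of_nonneg_left (two_mul_poissonPmf_self_le n) hp0)

end BinomialPoissonW1

theorem binomial_poisson_W1_general (N μ : ℕ) (hN : 2 ≤ N) :
    W1nat (binomialMeas (μ * N) (1 / (N : ℝ))) (poissonMeas μ)
        ≤ ENNReal.ofReal (Real.sqrt (2 * μ / Real.pi) / Real.sqrt N) ∧
      Real.sqrt (2 * μ / Real.pi) / Real.sqrt N ≤ Real.sqrt μ / Real.sqrt N := by
  have hN0 : (0 : ℝ) < N := Nat.cast_pos.2 (by omega)
  have hp1 : 1 / (N : ℝ) ≤ 1 := (div_le_one hN0).2 (by exact_mod_cast (by omega : 1 ≤ N))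
  have hmean : ((μ * N : ℕ) : ℝ) * (1 / N) = μ := by
    push_cast
    field_simp
  have hscale : 1 / (N : ℝ) * √(2 * (μ * N : ℕ) / Real.pi) = √(2 * μ / Real.pi) / √N := by
    rw [Nat.cast_mul, show 2 * (μ * N : ℝ) / Real.pi = 2 * μ / Real.pi * N by ring,
      Real.sqrt_mul (by positivity)]
    field_simp
    rw [Real.sq_sqrt hN0.le, mul_comm]
  refine ⟨?_, ?_⟩
  · simpa only [hmean, hscale] using
      BinomialPoissonW1.W1nat_binomialMeas_poissonMeas_le (by positivity) hp1 (μ * N)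
  · gcongr
    rw [div_le_iff₀ Real.pi_pos]
    nlinarith [Real.pi_gt_three, (Nat.cast_nonneg μ : (0 : ℝ) ≤ μ)]

/-- `W₁(Binomial(μN, 1/N), Poisson(μ)) ≤ √(2μ/π)/√N ≤ √μ/√N`. -/
theorem binomial_poisson_W1 (N μ : ℕ) (hN : 2 ≤ N) (hμ : 1 ≤ μ) :
    W1nat (binomialMeas (μ * N) (1 / (N : ℝ))) (poissonMeas μ)
        ≤ ENNReal.ofReal (Real.sqrt (2 * μ / Real.pi) / Real.sqrt N) ∧
      Real.sqrt (2 * μ / Real.pi) / Real.sqrt N ≤ Real.sqrt μ / Real.sqrt N :=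
  binomial_poisson_W1_general N μ hN
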